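/- arXiv:2503.14913 — 3 statements merged into one kernel-verified Lean document; each statement's English description precedes it below -/
import Mathlib

section
/- Céa's lemma: let V be a real Hilbert space, B : V → V → ℝ a bilinear map that is bounded with constant α (|B(u,v)| ≤ α‖u‖‖v‖ for all u, v ∈ V) and coercive with constant β > 0 (β‖u‖² ≤ B(u,u) for all u ∈ V), and F : V → ℝ. Let S be a submodule of V. Suppose u ∈ V satisfies B(u, v) = F(v) for all v ∈ V, and u_h ∈ S satisfies B(u_h, v) = F(v) for all v ∈ S. Then for every v ∈ S, ‖u − u_h‖ ≤ (α/β) ‖u − v‖. -/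
/-- Céa's lemma (paper's Theorem 4.4). -/
theorem cea_lemma {V : Type*} [NormedAddCommGroup V] [InnerProductSpace ℝ V]
    [CompleteSpace V]
    (B : V →ₗ[ℝ] V →ₗ[ℝ] ℝ) (α β : ℝ) (hβ : 0 < β)
    (hbound : ∀ u v : V, |B u v| ≤ α * ‖u‖ * ‖v‖)
    (hcoerc : ∀ u : V, β * ‖u‖ ^ 2 ≤ B u u)
    (F : V → ℝ) (S : Submodule ℝ V)
    (u : V) (hu : ∀ v : V, B u v = F v)
    (uh : V) (huhS : uh ∈ S) (huh : ∀ v ∈ S, B uh v = F v) :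
    ∀ v ∈ S, ‖u - uh‖ ≤ (α / β) * ‖u - v‖ := by
  intro v hv
  have horth : ∀ w ∈ S, B (u - uh) w = 0 := by
    intro w hw
    simp [map_sub, hu w, huh w hw]
  by_cases he : ‖u - uh‖ = 0
  · rw [he]
    by_cases hv0 : ‖u - v‖ = 0
    · rw [hv0]; simp
    · have hv0' : 0 < ‖u - v‖ := lt_of_le_of_ne (norm_nonneg _) (Ne.symm hv0)
      have hα : 0 ≤ α := by
        have h1 := hcoerc (u - v)
        have h2 := le_trans (le_abs_self _) (hbound (u - v) (u - v))
        nlinarith [mul_pos hv0' hv0', hβ.le, sq_abs (‖u - v‖)]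
      positivity
  have hne : 0 < ‖u - uh‖ := lt_of_le_of_ne (norm_nonneg _) (Ne.symm he)
  have key : β * ‖u - uh‖ ^ 2 ≤ α * ‖u - uh‖ * ‖u - v‖ := by
    calc β * ‖u - uh‖ ^ 2 ≤ B (u - uh) (u - uh) := hcoerc _
      _ = B (u - uh) (u - v) + B (u - uh) (v - uh) := by
          rw [← map_add]; congr 1; abel
      _ = B (u - uh) (u - v) := by
          rw [horth (v - uh) (S.sub_mem hv huhS), add_zero]
      _ ≤ α * ‖u - uh‖ * ‖u - v‖ := le_trans (le_abs_self _) (hbound _ _)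
  rw [div_mul_eq_mul_div, le_div_iff₀ hβ]
  nlinarith [key, hne]
end

section
/- Abstract Aubin–Nitsche duality chain: let V and H be real Hilbert spaces and ι : V →L[ℝ] H a continuous linear map. Let B : V → V → ℝ be bilinear and bounded with constant α (|B(v,v')| ≤ α‖v‖‖v'‖ for all v, v' ∈ V), F : V → ℝ, and S a submodule of V. Suppose u ∈ V satisfies B(u, v) = F(v) for all v ∈ V, and u_h ∈ S satisfies B(u_h, v) = F(v) for all v ∈ S. Let e = u − u_h and suppose w ∈ V satisfies the adjoint problem B(v, w) = ⟪ι v, ι e⟫_H for all v ∈ V. Then for every z ∈ S, ‖ι e‖_H² ≤ α ‖e‖_V ‖w − z‖_V. -/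
open RealInnerProductSpace

/-- Abstract Aubin–Nitsche duality chain (chain of estimates (4.17) in the
proof of the paper's Theorem 4.8). -/
theorem aubin_nitsche_chain {V H : Type*}
    [NormedAddCommGroup V] [InnerProductSpace ℝ V] [CompleteSpace V]
    [NormedAddCommGroup H] [InnerProductSpace ℝ H] [CompleteSpace H]
    (ι : V →L[ℝ] H)
    (B : V →ₗ[ℝ] V →ₗ[ℝ] ℝ) (α : ℝ)
    (hbound : ∀ v v' : V, |B v v'| ≤ α * ‖v‖ * ‖v'‖)
    (F : V → ℝ) (S : Submodule ℝ V)
    (u : V) (hu : ∀ v : V, B u v = F v)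
    (uh : V) (huhS : uh ∈ S) (huh : ∀ v ∈ S, B uh v = F v)
    (w : V) (hw : ∀ v : V, B v w = ⟪ι v, ι (u - uh)⟫) :
    ∀ z ∈ S, ‖ι (u - uh)‖ ^ 2 ≤ α * ‖u - uh‖ * ‖w - z‖ := by
  intro z hz
  set e := u - uh with he
  have hBez : B e z = 0 := by
    simp only [he, map_sub, LinearMap.sub_apply, hu z, huh z hz, sub_self]
  have h1 : ‖ι e‖ ^ 2 = B e (w - z) := by
    rw [(B e).map_sub, hBez, sub_zero, hw e, real_inner_self_eq_norm_sq]
  calc ‖ι e‖ ^ 2 = B e (w - z) := h1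
    _ ≤ |B e (w - z)| := le_abs_self _
    _ ≤ α * ‖e‖ * ‖w - z‖ := hbound e (w - z)
end

section
/- Abstract L² error estimate (Theorem 4.8, abstract form): let V and H be real Hilbert spaces and ι : V →L[ℝ] H a continuous linear map. Let B : V → V → ℝ be bilinear and bounded with constant α, F : V → ℝ, and S a submodule of V. Suppose u ∈ V satisfies B(u, v) = F(v) for all v ∈ V, and u_h ∈ S satisfies B(u_h, v) = F(v) for all v ∈ S; set e = u − u_h. Suppose w ∈ V satisfies B(v, w) = ⟪ι v, ι e⟫_H for all v ∈ V, and suppose there exist K ≥ 0 and z ∈ S with ‖w − z‖_V ≤ K ‖ι e‖_H. Then ‖ι e‖_H ≤ α K ‖e‖_V. -/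
open RealInnerProductSpace

/-- Abstract L² error estimate (paper's Theorem 4.8, abstract form): combining
Galerkin orthogonality, the dual problem and the approximation hypothesis
`‖w - z‖ ≤ K ‖ι e‖` yields `‖ι e‖ ≤ α K ‖e‖`. -/
theorem abstract_L2_estimate {V H : Type*}
    [NormedAddCommGroup V] [InnerProductSpace ℝ V] [CompleteSpace V]
    [NormedAddCommGroup H] [InnerProductSpace ℝ H] [CompleteSpace H]
    (ι : V →L[ℝ] H)
    (B : V →ₗ[ℝ] V →ₗ[ℝ] ℝ) (α : ℝ)
    (hbound : ∀ v v' : V, |B v v'| ≤ α * ‖v‖ * ‖v'‖)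
    (F : V → ℝ) (S : Submodule ℝ V)
    (u : V) (hu : ∀ v : V, B u v = F v)
    (uh : V) (huhS : uh ∈ S) (huh : ∀ v ∈ S, B uh v = F v)
    (w : V) (hw : ∀ v : V, B v w = ⟪ι v, ι (u - uh)⟫)
    (K : ℝ) (hK : 0 ≤ K)
    (z : V) (hz : z ∈ S) (happrox : ‖w - z‖ ≤ K * ‖ι (u - uh)‖) :
    ‖ι (u - uh)‖ ≤ α * K * ‖u - uh‖ := by
  set e := u - uh with he
  -- Galerkin orthogonality: B e z = 0
  have horth : B e z = 0 := by
    have : B u z - B uh z = 0 := by rw [hu z, huh z hz]; ring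
    simpa [he, map_sub, LinearMap.sub_apply] using this
  -- key identity : ‖ι e‖² = B e (w - z)
  have hkey : ‖ι e‖ ^ 2 = B e (w - z) := by
    have h1 : (B e) (w - z) = B e w := by
      rw [map_sub, horth]; ring
    rw [h1, hw e, real_inner_self_eq_norm_sq]
  have hnonneg : (0:ℝ) ≤ ‖ι e‖ ^ 2 := by positivity
  have hineq : ‖ι e‖ ^ 2 ≤ α * ‖e‖ * (K * ‖ι e‖) := by
    calc ‖ι e‖ ^ 2 = B e (w - z) := hkey
      _ ≤ |B e (w - z)| := le_abs_self _
      _ ≤ α * ‖e‖ * ‖w - z‖ := hbound e (w - z)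
      _ ≤ α * ‖e‖ * (K * ‖ι e‖) := by
          apply mul_le_mul_of_nonneg_left happrox
          rcases le_or_gt 0 α with hα | hα
          · positivity
          · -- α < 0 forces e = 0 (else B e e ≥ 0 contradicts bound)
            by_cases h0 : e = 0
            · simp [h0]
            · exfalso
              have := hbound e e
              have h2 : (0:ℝ) ≤ |B e e| := abs_nonneg _
              have hep : (0:ℝ) < ‖e‖ := norm_pos_iff.mpr h0
              nlinarith [hep, mul_pos hep hep]
  rcases eq_or_lt_of_le (norm_nonneg (ι e)) with h0 | h0
  · rw [← h0]
    rcases le_or_gt 0 α with hα | hα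
    · positivity
    · by_cases h1 : e = 0
      · simp [h1]
      · exfalso
        have := hbound e e
        have hep : (0:ℝ) < ‖e‖ := norm_pos_iff.mpr h1
        nlinarith [abs_nonneg ((B e) e), hep, mul_pos hep hep]
  · nlinarith [hineq]
end
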